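/- Let G be a cubic simple graph with girth at least 16, let A be a MAI set of G, let B = V(G) \ A, let Y be the set of vertices of degree 1 in G[A], and let Z be the set of vertices of degree 1 in G[B]. Let J be the set of edges of G with one endpoint in Y and the other endpoint in Z (J is a matching in G). Let H be the auxiliary graph with vertex set J in which two edges yz, y′z′ ∈ J (with y, y′ ∈ Y and z, z′ ∈ Z) are adjacent if and only if yy′ ∈ E(G) or zz′ ∈ E(G). Then the number of distinct MAI sets of G is at least I(H), the number of independent sets of H (including the empty set). -/

import Mathlib

/-- A set of vertices is independent if its vertices are pairwise nonadjacent. -/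
def IsIndep {V : Type*} (G : SimpleGraph V) (s : Set V) : Prop :=
  s.Pairwise fun u v => ¬ G.Adj u v

/-- The independence number of a graph: the largest size of an independent set. -/
noncomputable def indepNum {V : Type*} (G : SimpleGraph V) : ℕ :=
  sSup {n | ∃ s : Set V, IsIndep G s ∧ s.ncard = n}

/-- A graph is cubic (3-regular) if every vertex has exactly three neighbors. -/
def IsCubic {V : Type*} (G : SimpleGraph V) : Prop :=
  ∀ v : V, (G.neighborSet v).ncard = 3

/-- `A` is an AI set (almost independent set) if the subgraph induced by `A` has maximum
degree at most 1, i.e. every vertex of `A` has at most one neighbor inside `A`. -/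
def IsAI {V : Type*} (G : SimpleGraph V) (A : Set V) : Prop :=
  ∀ a ∈ A, ({b | b ∈ A ∧ G.Adj a b}).ncard ≤ 1

/-- `A` is a MAI set (maximum almost independent set) if `A` is an AI set containing an
independent set of maximum size `α(G)`, and `A` is largest among such sets. -/
def IsMAI {V : Type*} (G : SimpleGraph V) (A : Set V) : Prop :=
  IsAI G A ∧ (∃ s ⊆ A, IsIndep G s ∧ s.ncard = indepNum G) ∧
    ∀ A' : Set V, IsAI G A' → (∃ s ⊆ A', IsIndep G s ∧ s.ncard = indepNum G) →
      A'.ncard ≤ A.ncard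

/-!
Let `M` be a set of `J`-edges that is independent in `H`. Trading the `Y`-ends of `M` for their
`Z`-ends, `A ↦ (A \ Y(M)) ∪ Z(M)`, gives again an AI set containing a maximum independent set,
because of three consequences of maximality and girth at least `6`: a maximum independent
subset of `A` can be pushed off any independent set of degree-one vertices of `G[A]` by
exchanging each of them with its partner in `G[A]`; the second `A`-neighbour of a `Z`-vertex
matched into `Y` is isolated in `G[A]`; and two `Z`-vertices matched into `Y` have no common
isolated `A`-neighbour. Applied to two `J`-edges at one `Y`-vertex, the trade would produce an AI
set larger than `A`, so `J` is a matching; hence the trade preserves `|A|`, so it produces MAI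
sets, and it is injective in `M`.
-/
section Independence

variable {V : Type*} {G : SimpleGraph V} {s : Set V} {a : V}

theorem IsIndep.insert (hs : IsIndep G s) (ha : ∀ b ∈ s, ¬G.Adj a b) : IsIndep G (insert a s) :=
  Set.Pairwise.insert hs fun b hb _ => ⟨ha b hb, fun h => ha b hb h.symm⟩

theorem IsIndep.ncard_le_indepNum [Finite V] (hs : IsIndep G s) : s.ncard ≤ indepNum G :=
  le_csSup ⟨Nat.card V, by rintro n ⟨t, -, rfl⟩; exact Set.ncard_le_card t⟩ ⟨s, hs, rfl⟩

def IsMaxIndep (G : SimpleGraph V) (s : Set V) : Prop :=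
  IsIndep G s ∧ s.ncard = indepNum G

theorem IsMaxIndep.exists_adj [Finite V] (hs : IsMaxIndep G s) (ha : a ∉ s) :
    ∃ b ∈ s, G.Adj a b := by
  by_contra! h
  have := (hs.1.insert h).ncard_le_indepNum
  rw [Set.ncard_insert_of_notMem ha, hs.2] at this
  omega

theorem IsMaxIndep.exchange [Finite V] {y p : V} (hs : IsMaxIndep G s) (hy : y ∈ s)
    (hyp : G.Adj y p) (hp : ∀ b ∈ s, G.Adj p b → b = y) :
    IsMaxIndep G (insert p (s \ {y})) := by
  have hps : p ∉ s := fun h => hs.1 hy h hyp.ne hyp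
  refine ⟨IsIndep.insert (hs.1.mono Set.sdiff_subset) fun b hb hpb => hb.2 (hp b hb.1 hpb), ?_⟩
  rw [Set.ncard_insert_of_notMem fun h => hps h.1, Set.ncard_sdiff_singleton_add_one hy, hs.2]

end Independence

section AlmostIndependent

variable {V : Type*} {G : SimpleGraph V} {A s : Set V} {a b c v : V}

def nbrsIn (G : SimpleGraph V) (A : Set V) (v : V) : Set V :=
  {b | b ∈ A ∧ G.Adj v b}

def degOneIn (G : SimpleGraph V) (A : Set V) : Set V :=
  {a ∈ A | (nbrsIn G A a).ncard = 1}

def IsMAICandidate (G : SimpleGraph V) (A : Set V) : Prop :=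
  IsAI G A ∧ ∃ s ⊆ A, IsMaxIndep G s

theorem IsMAI.isMAICandidate (hA : IsMAI G A) : IsMAICandidate G A :=
  ⟨hA.1, hA.2.1⟩

theorem IsAI.ncard_nbrsIn_le_one (hA : IsAI G A) (ha : a ∈ A) : (nbrsIn G A a).ncard ≤ 1 :=
  hA a ha

theorem IsAI.eq_of_mem_nbrsIn [Finite V] (hA : IsAI G A) (hv : v ∈ A) (hb : b ∈ nbrsIn G A v)
    (hc : c ∈ nbrsIn G A v) : b = c :=
  (Set.ncard_le_one_iff).1 (hA.ncard_nbrsIn_le_one hv) hb hc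

theorem IsAI.nbrsIn_eq_empty [Finite V] (hA : IsAI G A) (ha : a ∈ A) (h : a ∉ degOneIn G A) :
    nbrsIn G A a = ∅ :=
  (Set.ncard_eq_zero (Set.toFinite _)).1 <| by
    have := hA.ncard_nbrsIn_le_one ha
    have : (nbrsIn G A a).ncard ≠ 1 := fun h' => h ⟨ha, h'⟩
    omega

theorem IsMaxIndep.mem_of_nbrsIn_eq_empty [Finite V] (hs : IsMaxIndep G s) (hsA : s ⊆ A)
    (ha : nbrsIn G A a = ∅) : a ∈ s := by
  by_contra h
  obtain ⟨b, hb, hab⟩ := hs.exists_adj h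
  exact ha.subset ⟨hsA hb, hab⟩

theorem IsMAICandidate.exists_isMaxIndep_subset_diff [Finite V] (hA : IsMAICandidate G A)
    {F : Set V} (hFA : F ⊆ degOneIn G A) (hF : IsIndep G F) :
    ∃ s ⊆ A \ F, IsMaxIndep G s := by
  obtain ⟨hAI, s, hsA, hs⟩ := hA
  induction hn : (s ∩ F).ncard using Nat.strong_induction_on generalizing s with
  | _ n ih =>
  rcases (s ∩ F).eq_empty_or_nonempty with hsF | ⟨y, hys, hyF⟩
  · exact ⟨s, fun x hx => ⟨hsA hx, fun hxF => hsF.subset ⟨hx, hxF⟩⟩, hs⟩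
  obtain ⟨hyA, hy1⟩ := hFA hyF
  obtain ⟨p, hp⟩ := Set.ncard_eq_one.1 hy1
  have hpy : p ∈ nbrsIn G A y := hp ▸ rfl
  have hyp : y ∈ nbrsIn G A p := ⟨hyA, hpy.2.symm⟩
  have hpF : p ∉ F := fun h => hF hyF h hpy.2.ne hpy.2
  have hinter : insert p (s \ {y}) ∩ F = (s ∩ F) \ {y} := by
    ext x
    simp only [Set.mem_inter_iff, Set.mem_insert_iff, Set.mem_sdiff, Set.mem_singleton_iff]
    constructor
    · rintro ⟨rfl | ⟨hx, hxy⟩, hxF⟩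
      exacts [absurd hxF hpF, ⟨⟨hx, hxF⟩, hxy⟩]
    · rintro ⟨⟨hx, hxF⟩, hxy⟩
      exact ⟨Or.inr ⟨hx, hxy⟩, hxF⟩
  refine ih _ ?_ (insert p (s \ {y})) ?_
    (hs.exchange hys hpy.2 fun b hb hpb => hAI.eq_of_mem_nbrsIn hpy.1 ⟨hsA hb, hpb⟩ hyp) rfl
  · rw [hinter, ← hn]
    exact Set.ncard_sdiff_singleton_lt_of_mem ⟨hys, hyF⟩
  · exact Set.insert_subset hpy.1 (Set.sdiff_subset.trans hsA)

end AlmostIndependent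

section Girth

variable {V : Type*} {G : SimpleGraph V} {a b c d e : V}

theorem not_adj_of_four_le_egirth (hG : 4 ≤ G.egirth) (hab : G.Adj a b) (hbc : G.Adj b c) :
    ¬G.Adj c a := fun hca => by
  have := hG.trans <| SimpleGraph.egirth_le_length
    (w := .cons hab (.cons hbc (.cons hca .nil)))
    (by simp_all [SimpleGraph.Walk.isCycle_def, SimpleGraph.Walk.isTrail_def, List.Nodup,
      Sym2.eq, Sym2.rel_iff', hab.ne, hbc.ne, hca.ne, Ne.symm])
  norm_num at this

theorem not_adj_of_six_le_egirth (hG : 6 ≤ G.egirth) (hab : G.Adj a b) (hbc : G.Adj b c)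
    (hcd : G.Adj c d) (hde : G.Adj d e) (hac : a ≠ c) (had : a ≠ d) (hbd : b ≠ d) (hbe : b ≠ e)
    (hce : c ≠ e) : ¬G.Adj e a := fun hea => by
  have := hG.trans <| SimpleGraph.egirth_le_length
    (w := .cons hab (.cons hbc (.cons hcd (.cons hde (.cons hea .nil)))))
    (by simp_all [SimpleGraph.Walk.isCycle_def, SimpleGraph.Walk.isTrail_def, List.Nodup,
      Sym2.eq, Sym2.rel_iff', hab.ne, hbc.ne, hcd.ne, hde.ne, hea.ne, Ne.symm])
  norm_num at this

end Girth

section Swap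

variable {V : Type*} [Finite V] {G : SimpleGraph V} {A : Set V} {M : Set (V × V)}
  {p q : V × V} {a v w z : V}

theorem ncard_nbrsIn_add_ncard_nbrsIn_compl (hG : IsCubic G) (A : Set V) (v : V) :
    (nbrsIn G A v).ncard + (nbrsIn G Aᶜ v).ncard = 3 := by
  rw [← hG v, ← Set.ncard_union_eq (Set.disjoint_left.2 fun b hb hb' => hb'.1 hb.1)]
  congr 1
  ext b
  simp only [nbrsIn, Set.mem_union, Set.mem_ofPred_eq, Set.mem_compl_iff,
    SimpleGraph.mem_neighborSet]
  tauto

theorem ncard_nbrsIn_eq_two (hG : IsCubic G) (hz : z ∈ degOneIn G Aᶜ) :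
    (nbrsIn G A z).ncard = 2 := by
  have := ncard_nbrsIn_add_ncard_nbrsIn_compl hG A z
  have := hz.2
  omega

theorem nbrsIn_eq_pair (hG : IsCubic G) (hz : z ∈ degOneIn G Aᶜ) (hv : v ∈ nbrsIn G A z)
    (hw : w ∈ nbrsIn G A z) (hvw : v ≠ w) : nbrsIn G A z = {v, w} :=
  (Set.eq_of_subset_of_ncard_le (Set.insert_subset hv (Set.singleton_subset_iff.2 hw))
    (by rw [ncard_nbrsIn_eq_two hG hz, Set.ncard_pair hvw])).symm

-- The edges of `J`, each written as the pair (its `Y`-end, its `Z`-end).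
def IsJEdge (G : SimpleGraph V) (A : Set V) (p : V × V) : Prop :=
  p.1 ∈ degOneIn G A ∧ p.2 ∈ degOneIn G Aᶜ ∧ G.Adj p.1 p.2

def swapEdges (A : Set V) (M : Set (V × V)) : Set V :=
  (A \ Prod.fst '' M) ∪ Prod.snd '' M

theorem IsMAICandidate.notMem_degOneIn (hA : IsMAICandidate G A) (hG : IsCubic G)
    (hgirth : 4 ≤ G.egirth) (hp : IsJEdge G A p) (hw : w ∈ nbrsIn G A p.2) (hwp : w ≠ p.1) :
    w ∉ degOneIn G A := by
  obtain ⟨hy, hz, hyz⟩ := hp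
  intro hwY
  have hyw : ¬G.Adj p.1 w := not_adj_of_four_le_egirth hgirth hw.2.symm hyz.symm
  obtain ⟨s, hsF, hs⟩ := hA.exists_isMaxIndep_subset_diff (F := {p.1, w})
    (Set.insert_subset hy (Set.singleton_subset_iff.2 hwY))
    (Set.pairwise_pair.2 fun _ => ⟨hyw, fun h => hyw h.symm⟩)
  have hpair := nbrsIn_eq_pair hG hz ⟨hy.1, hyz.symm⟩ hw hwp.symm
  obtain ⟨b, hb, hzb⟩ := hs.exists_adj fun h => hz.1 (hsF h).1
  exact (hsF hb).2 (hpair ▸ ⟨(hsF hb).1, hzb⟩)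

theorem IsMAICandidate.eq_of_snd_eq (hA : IsMAICandidate G A) (hG : IsCubic G)
    (hgirth : 4 ≤ G.egirth) (hp : IsJEdge G A p) (hq : IsJEdge G A q) (h : p.2 = q.2) :
    p = q :=
  Prod.ext (by_contra fun hne => hA.notMem_degOneIn hG hgirth hp
    ⟨hq.1.1, h ▸ hq.2.2.symm⟩ (Ne.symm hne) hq.1) h

theorem IsMAICandidate.snd_eq_of_mem_nbrsIn (hA : IsMAICandidate G A) (hG : IsCubic G)
    (hgirth : 6 ≤ G.egirth) (hp : IsJEdge G A p) (hq : IsJEdge G A q)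
    (hap : a ∈ nbrsIn G A p.2) (haq : a ∈ nbrsIn G A q.2) (hap' : a ≠ p.1) (haq' : a ≠ q.1) :
    p.2 = q.2 := by
  have hgirth4 : 4 ≤ G.egirth := le_trans (by norm_num) hgirth
  by_contra hzz
  obtain ⟨hy, hz, hyz⟩ := hp
  obtain ⟨hy', hz', hy'z'⟩ := hq
  have hyz' : p.1 ≠ q.2 := fun h => hz'.1 (h ▸ hy.1)
  have hzy' : p.2 ≠ q.1 := fun h => hz.1 (h ▸ hy'.1)
  have hnyy' : ¬G.Adj p.1 q.1 :=
    not_adj_of_six_le_egirth hgirth hy'z' haq.2 hap.2.symm hyz.symm haq'.symm hzy'.symm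
      (Ne.symm hzz) hyz'.symm hap'
  have hnzz : ¬G.Adj p.2 q.2 := not_adj_of_four_le_egirth hgirth4 haq.2 hap.2.symm
  obtain ⟨s, hsF, hs⟩ := hA.exists_isMaxIndep_subset_diff (F := {p.1, q.1})
    (Set.insert_subset hy (Set.singleton_subset_iff.2 hy'))
    (Set.pairwise_pair.2 fun _ => ⟨hnyy', fun h => hnyy' h.symm⟩)
  have has : a ∈ s := hs.mem_of_nbrsIn_eq_empty (fun x hx => (hsF hx).1)
    (hA.1.nbrsIn_eq_empty hap.1
      (hA.notMem_degOneIn hG hgirth4 ⟨hy, hz, hyz⟩ hap hap'))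
  have hno : ∀ {y z : V}, y ∈ ({p.1, q.1} : Set V) → nbrsIn G A z = {y, a} →
      ∀ b ∈ s \ {a}, ¬G.Adj z b := by
    rintro y z hyF hzN b ⟨hbs, hba⟩ hzb
    have : b ∈ nbrsIn G A z := ⟨(hsF hbs).1, hzb⟩
    rw [hzN] at this
    rcases this with rfl | rfl
    exacts [(hsF hbs).2 hyF, hba rfl]
  have hindep : IsIndep G (insert p.2 (insert q.2 (s \ {a}))) := by
    refine IsIndep.insert (IsIndep.insert (hs.1.mono Set.sdiff_subset)
      (hno (Or.inr rfl) (nbrsIn_eq_pair hG hz' ⟨hy'.1, hy'z'.symm⟩ haq haq'.symm))) ?_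
    rintro b (rfl | hb)
    exacts [hnzz, hno (Or.inl rfl) (nbrsIn_eq_pair hG hz ⟨hy.1, hyz.symm⟩ hap hap'.symm) b hb]
  have := hindep.ncard_le_indepNum
  rw [Set.ncard_insert_of_notMem (by rintro (h | h); exacts [hzz h, hz.1 (hsF h.1).1]),
    Set.ncard_insert_of_notMem fun h => hz'.1 (hsF h.1).1] at this
  have := Set.ncard_sdiff_singleton_add_one has
  have := hs.2
  omega

theorem isAI_swapEdges (hA : IsMAICandidate G A) (hG : IsCubic G)
    (hgirth : 6 ≤ G.egirth) (hM : ∀ p ∈ M, IsJEdge G A p)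
    (hMind : M.Pairwise fun p q => ¬G.Adj p.1 q.1 ∧ ¬G.Adj p.2 q.2) :
    IsAI G (swapEdges A M) := by
  have hgirth4 : 4 ≤ G.egirth := le_trans (by norm_num) hgirth
  rintro a (⟨haA, haM⟩ | ⟨p, hpM, rfl⟩)
  · by_cases haY : a ∈ degOneIn G A
    · refine le_trans (Set.ncard_le_ncard ?_) (hA.1.ncard_nbrsIn_le_one haA)
      rintro b ⟨hb | ⟨q, hqM, rfl⟩, hab⟩
      · exact ⟨hb.1, hab⟩
      · exact absurd haY (hA.notMem_degOneIn hG hgirth4 (hM q hqM) ⟨haA, hab.symm⟩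
          fun h => haM ⟨q, hqM, h.symm⟩)
    · have hform : ∀ b ∈ nbrsIn G (swapEdges A M) a,
          ∃ q ∈ M, q.2 = b ∧ a ∈ nbrsIn G A q.2 ∧ a ≠ q.1 := by
        rintro b ⟨hb | ⟨q, hqM, rfl⟩, hab⟩
        · exact absurd ((hA.1.nbrsIn_eq_empty haA haY).subset ⟨hb.1, hab⟩) id
        · exact ⟨q, hqM, rfl, ⟨haA, hab.symm⟩, fun h => haM ⟨q, hqM, h.symm⟩⟩
      refine (Set.ncard_le_one_iff).2 fun hb hc => ?_
      obtain ⟨q, hqM, rfl, haq, hne⟩ := hform _ hb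
      obtain ⟨r, hrM, rfl, har, hne'⟩ := hform _ hc
      exact hA.snd_eq_of_mem_nbrsIn hG hgirth (hM q hqM) (hM r hrM) haq har hne hne'
  · calc (nbrsIn G (swapEdges A M) p.2).ncard ≤ (nbrsIn G A p.2 \ {p.1}).ncard := by
          refine Set.ncard_le_ncard ?_
          rintro b ⟨hb | ⟨q, hqM, rfl⟩, hzb⟩
          · exact ⟨⟨hb.1, hzb⟩, fun h => hb.2 ⟨p, hpM, h.symm⟩⟩
          · have hpq : p ≠ q := by rintro rfl; exact G.irrefl hzb
            exact absurd hzb (hMind hpM hqM hpq).2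
      _ = 1 := by
          have hy : p.1 ∈ nbrsIn G A p.2 := ⟨(hM p hpM).1.1, (hM p hpM).2.2.symm⟩
          rw [Set.ncard_sdiff_singleton_of_mem hy, ncard_nbrsIn_eq_two hG (hM p hpM).2.1]

theorem isMAICandidate_swapEdges (hA : IsMAICandidate G A) (hG : IsCubic G)
    (hgirth : 6 ≤ G.egirth) (hM : ∀ p ∈ M, IsJEdge G A p)
    (hMind : M.Pairwise fun p q => ¬G.Adj p.1 q.1 ∧ ¬G.Adj p.2 q.2) :
    IsMAICandidate G (swapEdges A M) := by
  obtain ⟨s, hs, hsmax⟩ := hA.exists_isMaxIndep_subset_diff (F := Prod.fst '' M)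
    (by rintro _ ⟨p, hp, rfl⟩; exact (hM p hp).1)
    (by
      rintro _ ⟨p, hp, rfl⟩ _ ⟨q, hq, rfl⟩ hne
      exact (hMind hp hq fun h => hne (h ▸ rfl)).1)
  exact ⟨isAI_swapEdges hA hG hgirth hM hMind, s, hs.trans Set.subset_union_left, hsmax⟩

theorem ncard_swapEdges (hM1 : Prod.fst '' M ⊆ A) (hM2 : Disjoint A (Prod.snd '' M)) :
    (swapEdges A M).ncard + (Prod.fst '' M).ncard = A.ncard + (Prod.snd '' M).ncard := by
  rw [swapEdges, Set.ncard_union_eq (hM2.mono_left Set.sdiff_subset), add_right_comm,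
    Set.ncard_sdiff_add_ncard_of_subset hM1]

theorem IsMAI.eq_of_fst_eq (hA : IsMAI G A) (hG : IsCubic G) (hgirth : 6 ≤ G.egirth)
    (hp : IsJEdge G A p) (hq : IsJEdge G A q) (h : p.1 = q.1) : p = q := by
  by_contra hpq
  have hzz : p.2 ≠ q.2 := fun h' => hpq (Prod.ext h h')
  have hnzz : ¬G.Adj p.2 q.2 :=
    not_adj_of_four_le_egirth (le_trans (by norm_num) hgirth) (h ▸ hq.2.2.symm) hp.2.2
  have hcand := isMAICandidate_swapEdges hA.isMAICandidate hG hgirth (M := {p, q})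
    (by rintro r (rfl | rfl); exacts [hp, hq])
    (Set.pairwise_pair.2 fun _ => ⟨⟨h ▸ G.irrefl, hnzz⟩, ⟨h ▸ G.irrefl, fun h' => hnzz h'.symm⟩⟩)
  have hle := hA.2.2 _ hcand.1 hcand.2
  have hcard := ncard_swapEdges (A := A) (M := {p, q})
    (by rintro _ ⟨r, (rfl | rfl), rfl⟩; exacts [hp.1.1, hq.1.1])
    (Set.disjoint_right.2 <| by rintro _ ⟨r, (rfl | rfl), rfl⟩; exacts [hp.2.1.1, hq.2.1.1])
  rw [Set.image_pair, Set.image_pair, h, Set.pair_eq_singleton, Set.ncard_singleton,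
    Set.ncard_pair hzz] at hcard
  omega

theorem isMAI_swapEdges (hA : IsMAI G A) (hG : IsCubic G) (hgirth : 6 ≤ G.egirth)
    (hM : ∀ p ∈ M, IsJEdge G A p)
    (hMind : M.Pairwise fun p q => ¬G.Adj p.1 q.1 ∧ ¬G.Adj p.2 q.2) :
    IsMAI G (swapEdges A M) := by
  have hcard := ncard_swapEdges (A := A) (M := M)
    (by rintro _ ⟨p, hp, rfl⟩; exact (hM p hp).1.1)
    (Set.disjoint_right.2 <| by rintro _ ⟨p, hp, rfl⟩; exact (hM p hp).2.1.1)
  have hfst : M.InjOn Prod.fst := fun p hp q hq h =>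
    hA.eq_of_fst_eq hG hgirth (hM p hp) (hM q hq) h
  have hsnd : M.InjOn Prod.snd := fun p hp q hq h =>
    hA.isMAICandidate.eq_of_snd_eq hG (le_trans (by norm_num) hgirth) (hM p hp) (hM q hq) h
  rw [hfst.ncard_image, hsnd.ncard_image] at hcard
  have hswap := isMAICandidate_swapEdges hA.isMAICandidate hG hgirth hM hMind
  exact ⟨hswap.1, hswap.2, fun B h1 h2 => (hA.2.2 B h1 h2).trans (by omega)⟩

theorem swapEdges_injOn (hA : IsMAICandidate G A) (hG : IsCubic G)
    (hgirth : 4 ≤ G.egirth) : {M | ∀ p ∈ M, IsJEdge G A p}.InjOn (swapEdges A) := by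
  suffices h : ∀ M N : Set (V × V), (∀ p ∈ M, IsJEdge G A p) → (∀ p ∈ N, IsJEdge G A p) →
      swapEdges A M = swapEdges A N → M ⊆ N from
    fun M hM N hN hMN => (h M N hM hN hMN).antisymm (h N M hN hM hMN.symm)
  intro M N hM hN hMN p hp
  have : p.2 ∈ swapEdges A N := hMN ▸ Or.inr ⟨p, hp, rfl⟩
  rcases this with ⟨hpA, -⟩ | ⟨q, hq, hqp⟩
  · exact absurd hpA (hM p hp).2.1.1
  · exact hA.eq_of_snd_eq hG hgirth (hN q hq) (hM p hp) hqp ▸ hq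

end Swap

theorem pairwise_of_isIndep_fromRel {V : Type*} {G : SimpleGraph V} {P : V × V → Prop}
    {S : Set {p // P p}}
    (hS : IsIndep (SimpleGraph.fromRel fun e e' : {p // P p} =>
      G.Adj e.val.1 e'.val.1 ∨ G.Adj e.val.2 e'.val.2) S) :
    (Subtype.val '' S).Pairwise fun p q => ¬G.Adj p.1 q.1 ∧ ¬G.Adj p.2 q.2 := by
  rintro _ ⟨e, he, rfl⟩ _ ⟨e', he', rfl⟩ hne
  have hee' : e ≠ e' := fun h => hne (h ▸ rfl)
  have := hS he he' hee'
  simp only [SimpleGraph.fromRel_adj, ne_eq] at this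
  tauto

/-- with `G`, `A`, `Y`, `Z` as before (`G` cubic of girth at least 16, `A` a MAI
set), let `J` be the set of edges of `G` joining `Y` to `Z` and let `H` be the graph on `J`
where `yz` and `y'z'` are adjacent iff `yy' ∈ E(G)` or `zz' ∈ E(G)`. Then the number of MAI
sets of `G` is at least `I(H)`, the number of independent sets of `H`. -/
theorem card_MAI_ge_card_indep_aux {V : Type*} [Fintype V] (G : SimpleGraph V)
    (hcubic : IsCubic G) (hgirth : 16 ≤ G.egirth)
    (A : Set V) (hA : IsMAI G A) (Y Z : Set V)
    (hY : Y = {a ∈ A | ({b | b ∈ A ∧ G.Adj a b}).ncard = 1})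
    (hZ : Z = {a ∈ Aᶜ | ({b | b ∈ Aᶜ ∧ G.Adj a b}).ncard = 1}) :
    Nat.card {s : Set {p : V × V // p.1 ∈ Y ∧ p.2 ∈ Z ∧ G.Adj p.1 p.2} //
        IsIndep (SimpleGraph.fromRel fun e e' => G.Adj e.val.1 e'.val.1 ∨ G.Adj e.val.2 e'.val.2) s}
      ≤ Nat.card {A' : Set V // IsMAI G A'} := by
  obtain rfl : Y = degOneIn G A := hY
  obtain rfl : Z = degOneIn G Aᶜ := hZ
  have hJ (S : Set {p // IsJEdge G A p}) : ∀ p ∈ Subtype.val '' S, IsJEdge G A p := by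
    rintro _ ⟨p, -, rfl⟩
    exact p.2
  refine Nat.card_le_card_of_injective
    (fun S => ⟨swapEdges A (Subtype.val '' S.1), isMAI_swapEdges hA hcubic
      (le_trans (by norm_num) hgirth) (hJ S.1) (pairwise_of_isIndep_fromRel S.2)⟩) ?_
  intro S T hST
  exact Subtype.ext <| Subtype.val_injective.image_injective <|
    swapEdges_injOn hA.isMAICandidate hcubic (le_trans (by norm_num) hgirth) (hJ S.1) (hJ T.1)
      (congrArg Subtype.val hST)
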